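/- arXiv:2305.03460 — 2 statements merged into one kernel-verified Lean document; each statement's English description precedes it below -/
import Mathlib

section
/- Let p be a prime, d ≥ 1, V = F_p^d, and let G be an irreducible subgroup of GL(V). Let Δ be a G-invariant subset of V (i.e., Δ·g = Δ for all g ∈ G). If for some m ≥ 1 the m-fold sumset m·Δ contains a nontrivial line b + F_p·v for some b ∈ V and some nonzero v ∈ V, then the dm-fold sumset dm·Δ equals V. -/
/-- The `m`-fold sumset of a subset `Δ` of an additive commutative monoid. -/
def sumset {V : Type*} [AddCommMonoid V] (m : ℕ) (Δ : Set V) : Set V :=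
  {x | ∃ f : Fin m → V, (∀ i, f i ∈ Δ) ∧ ∑ i, f i = x}

/-- The orbit of a vector `v` under a subgroup `G` of the general linear group
(realized as units of the endomorphism ring). -/
def orbitOf {R V : Type*} [CommSemiring R] [AddCommMonoid V] [Module R V]
    (G : Subgroup (Module.End R V)ˣ) (v : V) : Set V :=
  {w | ∃ g ∈ G, (g : Module.End R V) v = w}

/-- A linear group `G ≤ GL(V)` is irreducible if the only `G`-invariant subspaces
of `V` are `0` and `V`. -/
def IsIrreducibleLinearGroup {R V : Type*} [CommSemiring R] [AddCommMonoid V] [Module R V]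
    (G : Subgroup (Module.End R V)ˣ) : Prop :=
  ∀ W : Submodule R V, (∀ g ∈ G, ∀ w ∈ W, (g : Module.End R V) w ∈ W) → W = ⊥ ∨ W = ⊤

/-!
The orbit of `v` under `G` spans a `G`-invariant subspace, hence all of `V` by irreducibility,
so it contains a basis `g₁ v, …, g_d v`. Since `m·Δ` is `G`-invariant, it contains each line
`gᵢ b + 𝔽_p • gᵢ v`, and every vector of `V` is a sum of one point from each of these `d` lines.
-/

section Sumset

variable {V : Type*} [AddCommMonoid V]

theorem sum_mem_sumset {ι : Type*} [Fintype ι] {m : ℕ} {Δ : Set V} {x : ι → V}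
    (hx : ∀ i, x i ∈ sumset m Δ) : ∑ i, x i ∈ sumset (Fintype.card ι * m) Δ := by
  choose f hf hfx using hx
  let e : ι × Fin m ≃ Fin (Fintype.card ι * m) :=
    (Fintype.equivFin ι).prodCongr (Equiv.refl _) |>.trans finProdFinEquiv
  refine ⟨fun k => f (e.symm k).1 (e.symm k).2, fun k => hf _ _, ?_⟩
  rw [← Fintype.sum_equiv e (fun q => f q.1 q.2) _ (fun q => by simp), Fintype.sum_prod_type]
  exact Finset.sum_congr rfl fun i _ => hfx i

theorem mapsTo_sumset {W F : Type*} [AddCommMonoid W] [FunLike F V W] [AddMonoidHomClass F V W]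
    {f : F} {m : ℕ} {Δ : Set V} {Δ' : Set W} (hf : Set.MapsTo f Δ Δ') :
    Set.MapsTo f (sumset m Δ) (sumset m Δ') := by
  rintro _ ⟨x, hx, rfl⟩
  exact ⟨fun i => f (x i), fun i => hf (hx i), (map_sum f x _).symm⟩

end Sumset

theorem Module.Basis.exists_sum_add_smul_eq {ι K V : Type*} [Fintype ι] [Ring K] [AddCommGroup V]
    [Module K V] (B : Module.Basis ι K V) (c : ι → V) (x : V) :
    ∃ α : ι → K, ∑ i, (c i + α i • B i) = x :=
  ⟨B.repr (x - ∑ i, c i), by rw [Finset.sum_add_distrib, B.sum_repr, add_sub_cancel]⟩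

theorem sumset_finrank_mul_eq_univ_of_basis {ι K V : Type*} [Finite ι] [Ring K]
    [StrongRankCondition K] [AddCommGroup V] [Module K V] (B : Module.Basis ι K V) {m : ℕ}
    {Δ : Set V} (c : ι → V) (hline : ∀ i (α : K), c i + α • B i ∈ sumset m Δ) :
    sumset (Module.finrank K V * m) Δ = Set.univ := by
  cases nonempty_fintype ι
  refine Set.eq_univ_of_forall fun x => ?_
  obtain ⟨α, rfl⟩ := B.exists_sum_add_smul_eq c x
  rw [Module.finrank_eq_card_basis B]
  exact sum_mem_sumset fun i => hline i (α i)

section Orbit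

variable {R V : Type*} [CommSemiring R] [AddCommMonoid V] [Module R V]
  {G : Subgroup (Module.End R V)ˣ} {v : V}

theorem self_mem_orbitOf : v ∈ orbitOf G v :=
  ⟨1, one_mem G, rfl⟩

theorem mapsTo_orbitOf {g : (Module.End R V)ˣ} (hg : g ∈ G) :
    Set.MapsTo (g : Module.End R V) (orbitOf G v) (orbitOf G v) := by
  rintro _ ⟨h, hh, rfl⟩
  exact ⟨g * h, mul_mem hg hh, rfl⟩

theorem span_orbitOf_eq_top (hirr : IsIrreducibleLinearGroup G) (hv : v ≠ 0) :
    Submodule.span R (orbitOf G v) = ⊤ := by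
  refine (hirr _ fun g hg w hw => ?_).resolve_left fun hbot => hv ?_
  · refine (Submodule.map_span_le _ _ _).2 (fun u hu => ?_) (Submodule.mem_map_of_mem hw)
    exact Submodule.subset_span (mapsTo_orbitOf hg hu)
  · rw [← Submodule.mem_bot R, ← hbot]
    exact Submodule.subset_span self_mem_orbitOf

end Orbit

theorem sumset_univ_of_contains_line_general (p d : ℕ) (hp : p.Prime)
    (G : Subgroup (Module.End (ZMod p) (Fin d → ZMod p))ˣ)
    (hirr : IsIrreducibleLinearGroup G)
    (Δ : Set (Fin d → ZMod p))
    (hinv : ∀ g ∈ G, (fun w => (g : Module.End (ZMod p) (Fin d → ZMod p)) w) '' Δ = Δ)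
    (m : ℕ) (b v : Fin d → ZMod p) (hv : v ≠ 0)
    (hline : {x | ∃ α : ZMod p, x = b + α • v} ⊆ sumset m Δ) :
    sumset (d * m) Δ = Set.univ := by
  have := Fact.mk hp
  have hspan := span_orbitOf_eq_top hirr hv
  let B := Module.Basis.ofSpan hspan.ge
  have := Module.Finite.finite_basis B
  choose g hgG hgv using fun i => Module.Basis.ofSpan_subset hspan.ge ⟨i, rfl⟩
  have huniv := sumset_finrank_mul_eq_univ_of_basis B
    (fun i => (g i : Module.End (ZMod p) (Fin d → ZMod p)) b)
    fun i α => by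
      rw [← hgv i, ← map_smul, ← map_add]
      exact mapsTo_sumset (Set.mapsTo_iff_image_subset.2 (hinv _ (hgG i)).subset)
        (hline ⟨α, rfl⟩)
  rwa [Module.finrank_fin_fun] at huniv

theorem sumset_univ_of_contains_line (p d : ℕ) (hp : p.Prime) (hd : 1 ≤ d)
    (G : Subgroup (Module.End (ZMod p) (Fin d → ZMod p))ˣ)
    (hirr : IsIrreducibleLinearGroup G)
    (Δ : Set (Fin d → ZMod p))
    (hinv : ∀ g ∈ G, (fun w => (g : Module.End (ZMod p) (Fin d → ZMod p)) w) '' Δ = Δ)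
    (m : ℕ) (hm : 1 ≤ m) (b v : Fin d → ZMod p) (hv : v ≠ 0)
    (hline : {x | ∃ α : ZMod p, x = b + α • v} ⊆ sumset m Δ) :
    sumset (d * m) Δ = Set.univ :=
  sumset_univ_of_contains_line_general p d hp G hirr Δ hinv m b v hv hline
end

section
/- Let p be a prime, V a vector space over F_p, and A ∈ GL(V) with A^p = Id and (A − Id)^k = 0, where 2 ≤ k ≤ p. Let α ∈ F_p and let x₁, …, x_m ∈ F_p satisfy x₁^i + ⋯ + x_m^i = 0 for all 1 ≤ i ≤ k−2 and x₁^{k−1} + ⋯ + x_m^{k−1} = α·(k−1)!. Then A^{x₁} + ⋯ + A^{x_m} = m·Id + α·(A − Id)^{k−1}, where A^{x_j} means A raised to any nonnegative integer representative of x_j modulo p. -/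
open Finset Polynomial

lemma desc_cast (p : ℕ) (n i : ℕ) :
    ((n.descFactorial i : ℕ) : ZMod p) = ∏ e ∈ Finset.range i, ((n : ZMod p) - e) := by
  induction i with
  | zero => simp
  | succ i ih =>
    rw [Nat.descFactorial_succ, Finset.prod_range_succ, Nat.cast_mul, ih]
    rcases le_or_gt i n with h | h
    · rw [Nat.cast_sub h]; ring
    · have hz : ∏ e ∈ Finset.range i, ((n : ZMod p) - e) = 0 :=
        Finset.prod_eq_zero (Finset.mem_range.mpr h) (by simp)
      rw [hz, mul_zero, zero_mul]

lemma poly_sum {F : Type*} [CommRing F] [Nontrivial F] (m : ℕ) (x : Fin m → F) (k : ℕ) (hk2 : 2 ≤ k)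
    (α : F) (hpow : ∀ i : ℕ, 1 ≤ i → i ≤ k - 2 → ∑ j, (x j) ^ i = 0)
    (hlast : ∑ j, (x j) ^ (k - 1) = α * ((k - 1).factorial : F)) :
    ∀ i, 1 ≤ i → i ≤ k - 1 →
      ∑ j, ∏ e ∈ Finset.range i, (x j - (e : F)) =
        if i = k - 1 then α * ((k - 1).factorial : F) else 0 := by
  intro i hi1 hik
  set Q : F[X] := ∏ e ∈ Finset.range i, (X - C (e : F)) with hQ
  have hmon : ∀ e ∈ Finset.range i, (X - C (e : F)).Monic := fun e _ => monic_X_sub_C _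
  have hmonic : Q.Monic := monic_prod_of_monic _ _ hmon
  have hdeg : Q.natDegree = i := by
    rw [hQ, natDegree_prod_of_monic _ _ hmon]
    simp only [natDegree_X_sub_C, Finset.sum_const, Finset.card_range, smul_eq_mul, mul_one]
  have heval : ∀ y : F, Q.eval y = ∏ e ∈ Finset.range i, (y - e) := by
    intro y; simp [hQ, eval_prod]
  have hc0 : Q.coeff 0 = 0 := by
    rw [coeff_zero_eq_eval_zero, heval]
    exact Finset.prod_eq_zero (Finset.mem_range.mpr hi1) (by simp)
  have hswap : ∑ j, ∏ e ∈ Finset.range i, (x j - (e : F)) =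
      ∑ d ∈ Finset.range (i + 1), Q.coeff d * ∑ j, x j ^ d := by
    calc ∑ j, ∏ e ∈ Finset.range i, (x j - (e : F))
        = ∑ j, ∑ d ∈ Finset.range (i + 1), Q.coeff d * x j ^ d := by
          refine Finset.sum_congr rfl fun j _ => ?_
          rw [← heval, eval_eq_sum_range' (by omega : Q.natDegree < i + 1)]
      _ = ∑ d ∈ Finset.range (i + 1), Q.coeff d * ∑ j, x j ^ d := by
          rw [Finset.sum_comm]
          exact Finset.sum_congr rfl fun d _ => (Finset.mul_sum _ _ _).symm
  rw [hswap]
  by_cases h : i = k - 1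
  · subst h
    rw [if_pos rfl, Finset.sum_eq_single_of_mem (k - 1) (Finset.self_mem_range_succ _)]
    · have : Q.coeff (k - 1) = 1 := by rw [← hdeg]; exact hmonic.coeff_natDegree
      rw [this, one_mul, hlast]
    · intro d hd hne
      rcases Nat.eq_zero_or_pos d with rfl | hd1
      · rw [hc0, zero_mul]
      · have hd2 : d ≤ k - 2 := by
          have := Finset.mem_range.mp hd; omega
        rw [hpow d hd1 hd2, mul_zero]
  · rw [if_neg h]
    apply Finset.sum_eq_zero
    intro d hd
    rcases Nat.eq_zero_or_pos d with rfl | hd1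
    · rw [hc0, zero_mul]
    · have hd2 : d ≤ k - 2 := by
        have := Finset.mem_range.mp hd; omega
      rw [hpow d hd1 hd2, mul_zero]

/-- If `A ∈ GL(V)` over `F_p` satisfies `A^p = Id` and `(A - Id)^k = 0` with
`2 ≤ k ≤ p`, and `x₁, …, x_m ∈ F_p` have vanishing power sums of exponents
`1, …, k-2` and `(k-1)`-st power sum equal to `α·(k-1)!`, then
`A^{x₁} + ⋯ + A^{x_m} = m·Id + α·(A - Id)^{k-1}`, where `A^{x_j}` is computed
via the canonical integer representative of `x_j`. -/
theorem sum_pow_eq (p : ℕ) (hp : p.Prime) (V : Type*) [AddCommGroup V]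
    [Module (ZMod p) V] (A : (Module.End (ZMod p) V)ˣ)
    (hAp : (A : Module.End (ZMod p) V) ^ p = 1)
    (k : ℕ) (hk2 : 2 ≤ k) (hkp : k ≤ p)
    (hA : ((A : Module.End (ZMod p) V) - 1) ^ k = 0)
    (α : ZMod p) (m : ℕ) (x : Fin m → ZMod p)
    (hpow : ∀ i : ℕ, 1 ≤ i → i ≤ k - 2 → ∑ j, (x j) ^ i = 0)
    (hlast : ∑ j, (x j) ^ (k - 1) = α * ((k - 1).factorial : ZMod p)) :
    ∑ j, (A : Module.End (ZMod p) V) ^ (x j).val =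
      (m : Module.End (ZMod p) V) +
        α • ((A : Module.End (ZMod p) V) - 1) ^ (k - 1) := by
  classical
  haveI : Fact p.Prime := ⟨hp⟩
  set R := Module.End (ZMod p) V with hR
  set N : R := (A : R) - 1 with hN
  have hNk : ∀ i, k ≤ i → N ^ i = 0 := by
    intro i hi
    have : i = (i - k) + k := by omega
    rw [this, pow_add, hA, mul_zero]
  -- power formula
  have hpf : ∀ n : ℕ, (A : R) ^ n = ∑ i ∈ Finset.range k, N ^ i * ((n.choose i : ℕ) : R) := by
    intro n
    have hA1 : (A : R) = N + 1 := by rw [hN]; abel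
    rw [hA1, Commute.add_pow (Commute.one_right N)]
    simp only [one_pow, mul_one]
    have h1 : ∑ i ∈ Finset.range (n + 1), N ^ i * ((n.choose i : ℕ) : R)
        = ∑ i ∈ Finset.range (max (n + 1) k), N ^ i * ((n.choose i : ℕ) : R) := by
      refine Finset.sum_subset (Finset.range_subset_range.mpr (le_max_left _ _)) ?_
      intro i _ hi
      rw [Nat.choose_eq_zero_of_lt (by simpa using hi), Nat.cast_zero, mul_zero]
    have h2 : ∑ i ∈ Finset.range k, N ^ i * ((n.choose i : ℕ) : R)
        = ∑ i ∈ Finset.range (max (n + 1) k), N ^ i * ((n.choose i : ℕ) : R) := by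
      refine Finset.sum_subset (Finset.range_subset_range.mpr (le_max_right _ _)) ?_
      intro i _ hi
      rw [hNk i (by simpa using hi), zero_mul]
    rw [h1, h2]
  have hval : ∀ j, (((x j).val : ℕ) : ZMod p) = x j := fun j => ZMod.natCast_rightInverse (x j)
  have hfac_ne : ∀ i, i ≤ k - 1 → ((i.factorial : ℕ) : ZMod p) ≠ 0 := by
    intro i hi hz
    rw [ZMod.natCast_eq_zero_iff] at hz
    have := (Nat.Prime.dvd_factorial hp).mp hz
    omega
  have hchoose : ∀ i, 1 ≤ i → i ≤ k - 1 →
      ∑ j, (((x j).val.choose i : ℕ) : ZMod p) = if i = k - 1 then α else 0 := by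
    intro i hi1 hik
    apply mul_right_cancel₀ (hfac_ne i hik)
    rw [Finset.sum_mul]
    have hterm : ∀ j : Fin m, (((x j).val.choose i : ℕ) : ZMod p) * ((i.factorial : ℕ) : ZMod p)
        = ∏ e ∈ Finset.range i, (x j - (e : ZMod p)) := by
      intro j
      rw [← Nat.cast_mul, mul_comm, ← Nat.descFactorial_eq_factorial_mul_choose,
        desc_cast, hval j]
    simp_rw [hterm]
    rw [poly_sum m x k hk2 α hpow hlast i hi1 hik]
    split_ifs with h
    · subst h; ring
    · rw [zero_mul]
  -- main computation
  calc ∑ j, (A : R) ^ (x j).val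
      = ∑ j, ∑ i ∈ Finset.range k, N ^ i * (((x j).val.choose i : ℕ) : R) :=
        Finset.sum_congr rfl fun j _ => hpf _
    _ = ∑ i ∈ Finset.range k, N ^ i *
          algebraMap (ZMod p) R (∑ j, (((x j).val.choose i : ℕ) : ZMod p)) := by
        rw [Finset.sum_comm]
        refine Finset.sum_congr rfl fun i _ => ?_
        rw [map_sum, Finset.mul_sum]
        exact Finset.sum_congr rfl fun j _ => by rw [map_natCast]
    _ = ∑ i ∈ ({0, k - 1} : Finset ℕ), N ^ i *
          algebraMap (ZMod p) R (∑ j, (((x j).val.choose i : ℕ) : ZMod p)) := by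
        refine (Finset.sum_subset ?_ ?_).symm
        · intro i hi
          simp only [Finset.mem_insert, Finset.mem_singleton] at hi
          rcases hi with rfl | rfl <;> simp [Finset.mem_range] <;> omega
        · intro i hi hni
          simp only [Finset.mem_insert, Finset.mem_singleton, not_or] at hni
          have hi1 : 1 ≤ i := by omega
          have hik : i ≤ k - 1 := by
            have := Finset.mem_range.mp hi; omega
          rw [hchoose i hi1 hik, if_neg hni.2, map_zero, mul_zero]
    _ = (m : R) + α • N ^ (k - 1) := by
        rw [Finset.sum_pair (by omega : (0 : ℕ) ≠ k - 1)]
        have h0 : ∑ j : Fin m, (((x j).val.choose 0 : ℕ) : ZMod p) = (m : ZMod p) := by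
          simp
        have h1 := hchoose (k - 1) (by omega) le_rfl
        rw [if_pos rfl] at h1
        rw [h0, h1, pow_zero, one_mul, map_natCast, Algebra.smul_def]
        rw [← Algebra.commutes]
end
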